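/- Let t, s ∈ (1,∞) and set ν_t = μ_t/√(6(1+t²)) (the normalization of μ_t, since ‖μ_t‖² = 6(1+t²)). If there exist orthogonal matrices A₁ ∈ O(6) and A₂ ∈ O(3) such that A₁⁻¹ J_{ν_s}(w) A₁ = J_{ν_t}(A₂⁻¹ w) for all w ∈ span(e₇,e₈,e₉) (identifying the center with ℝ³), then t = s. -/

import Mathlib

open Matrix Finset Real Filter

noncomputable section

/-- The canonical basis vector `eᵢ` of `ℝ⁹` (0-indexed: `e 0 = e₁`, …, `e 8 = e₉`). -/
def e (i : Fin 9) : Fin 9 → ℝ := Pi.single i 1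

/-- Half of the structure constants of `μ_t` (before antisymmetrization):
`μ_t(e₅,e₄)=e₇, μ_t(e₁,e₆)=e₈, μ_t(e₃,e₂)=e₉, μ_t(e₃,e₆)=t e₇, μ_t(e₅,e₂)=t e₈, μ_t(e₁,e₄)=t e₉`. -/
def muHalf (t : ℝ) (i j k : Fin 9) : ℝ :=
  (if i = 4 ∧ j = 3 ∧ k = 6 then (1:ℝ) else 0) +
  (if i = 0 ∧ j = 5 ∧ k = 7 then (1:ℝ) else 0) +
  (if i = 2 ∧ j = 1 ∧ k = 8 then (1:ℝ) else 0) +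
  (if i = 2 ∧ j = 5 ∧ k = 6 then t else 0) +
  (if i = 4 ∧ j = 1 ∧ k = 7 then t else 0) +
  (if i = 0 ∧ j = 3 ∧ k = 8 then t else 0)

/-- The (antisymmetric) structure constants of `μ_t`. -/
def muC (t : ℝ) (i j k : Fin 9) : ℝ := muHalf t i j k - muHalf t j i k

/-- The two-step nilpotent Lie bracket `μ_t` on `ℝ⁹`. -/
def mu (t : ℝ) (X Y : Fin 9 → ℝ) : Fin 9 → ℝ :=
  fun k => ∑ i, ∑ j, X i * Y j * muC t i j k

/-- Structure constants of `μ̃_t`: those of `μ_t` plus `μ̃_t(e₁,e₂)=e₇`. -/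
def muTildeHalf (t : ℝ) (i j k : Fin 9) : ℝ :=
  muHalf t i j k + (if i = 0 ∧ j = 1 ∧ k = 6 then (1:ℝ) else 0)

def muTildeC (t : ℝ) (i j k : Fin 9) : ℝ := muTildeHalf t i j k - muTildeHalf t j i k

/-- The two-step nilpotent Lie bracket `μ̃_t` on `ℝ⁹`. -/
def muTilde (t : ℝ) (X Y : Fin 9 → ℝ) : Fin 9 → ℝ :=
  fun k => ∑ i, ∑ j, X i * Y j * muTildeC t i j k

/-- Structure constants of `μ̄_t`: those of `μ̃_t` plus `μ̄_t(e₃,e₄)=e₈`. -/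
def muBarHalf (t : ℝ) (i j k : Fin 9) : ℝ :=
  muTildeHalf t i j k + (if i = 2 ∧ j = 3 ∧ k = 7 then (1:ℝ) else 0)

def muBarC (t : ℝ) (i j k : Fin 9) : ℝ := muBarHalf t i j k - muBarHalf t j i k

/-- The two-step nilpotent Lie bracket `μ̄_t` on `ℝ⁹`. -/
def muBar (t : ℝ) (X Y : Fin 9 → ℝ) : Fin 9 → ℝ :=
  fun k => ∑ i, ∑ j, X i * Y j * muBarC t i j k

/-- The space of (skew-symmetric bilinear) bracket candidates on `ℝ⁹`,
represented as bare functions. -/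
abbrev NilBracket := (Fin 9 → ℝ) → (Fin 9 → ℝ) → Fin 9 → ℝ

/-- The Ricci operator of `(ℝ⁹, ν)` w.r.t. the canonical inner product, as a matrix in the
canonical basis:
`⟨Ric_ν X, Y⟩ = -(1/2)∑ᵢⱼ⟨ν(X,eᵢ),eⱼ⟩⟨ν(Y,eᵢ),eⱼ⟩ + (1/4)∑ᵢⱼ⟨ν(eᵢ,eⱼ),X⟩⟨ν(eᵢ,eⱼ),Y⟩`. -/
def ric (ν : NilBracket) : Matrix (Fin 9) (Fin 9) ℝ :=
  fun a b =>
    -(1/2) * (∑ i, ∑ j, ν (e a) (e i) j * ν (e b) (e i) j)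
    + (1/4) * (∑ i, ∑ j, ν (e i) (e j) a * ν (e i) (e j) b)

/-- `D` is a derivation of the algebra `(ℝ⁹, ν)`. -/
def IsDerivation (ν : NilBracket) (D : Matrix (Fin 9) (Fin 9) ℝ) : Prop :=
  ∀ X Y : Fin 9 → ℝ, D.mulVec (ν X Y) = ν (D.mulVec X) Y + ν X (D.mulVec Y)

/-- The basis `e₁,…,e₆` of `v = span(e₁,…,e₆) ⊆ ℝ⁹`, indexed by `Fin 6`. -/
def E (a : Fin 6) : Fin 9 → ℝ := e (Fin.castLE (by norm_num) a)

/-- The skew-symmetric 6×6 matrix `J_ν(w)`, `w = x e₇ + y e₈ + z e₉`, defined by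
`⟨J_ν(w) v₁, v₂⟩ = ⟨ν(v₁,v₂), w⟩` for `v₁,v₂ ∈ span(e₁,…,e₆)`. -/
def Jmat (ν : NilBracket) (x y z : ℝ) : Matrix (Fin 6) (Fin 6) ℝ :=
  fun a b => ν (E b) (E a) 6 * x + ν (E b) (E a) 7 * y + ν (E b) (E a) 8 * z

/-- The `GL₉(ℝ)` action on brackets: `(g·ν)(X,Y) = g ν(g⁻¹X, g⁻¹Y)`. -/
def act (g : Matrix (Fin 9) (Fin 9) ℝ) (ν : NilBracket) : NilBracket :=
  fun X Y => g.mulVec (ν (g⁻¹.mulVec X) (g⁻¹.mulVec Y))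

/-- The algebras `(ℝ⁹, ν)` and `(ℝ⁹, ν')` are isomorphic:
there is `g ∈ GL₉(ℝ)` with `g ν(X,Y) = ν'(gX, gY)` for all `X, Y`. -/
def LieIso (ν ν' : NilBracket) : Prop :=
  ∃ g : Matrix (Fin 9) (Fin 9) ℝ, IsUnit g ∧
    ∀ X Y : Fin 9 → ℝ, g.mulVec (ν X Y) = ν' (g.mulVec X) (g.mulVec Y)

/-- The normalized bracket `ν_t = μ_t / ‖μ_t‖`, where `‖μ_t‖² = 6(1+t²)`. -/
def nmu (t : ℝ) : NilBracket := fun X Y => (1 / Real.sqrt (6*(1+t^2))) • mu t X Y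

/-!
`J_{μ_r}(x, y, z)` has Pfaffian `±(1 + r³) x y z`; after normalization
`det J_{ν_r}(w) = c(r) / 216 · (x y z)²` with `c(r) = (1 + r³)² / (1 + r²)³`.
Conjugation by `A₁` preserves the determinant, so `c(s) p(w) = c(t) p(A₂⁻¹ w)` with
`p(w) = (x y z)²`. On the sphere of radius `√3`, which `A₂⁻¹` preserves, `p` attains its
maximum `1` at `(1, 1, 1)`; comparing maxima gives `c(s) = c(t)`. Finally `c` is strictly
increasing on `[1, ∞)`, since `c'(r) = 6 r (r - 1)(1 + r³) / (1 + r²)⁴`.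
-/

theorem mu_single (t : ℝ) (i j k : Fin 9) : mu t (e i) (e j) k = muC t i j k := by
  simp [mu, e, Pi.single_apply]

theorem Jmat_smul (c : ℝ) (ν : NilBracket) (x y z : ℝ) :
    Jmat (fun X Y => c • ν X Y) x y z = c • Jmat ν x y z := by
  ext a b
  simp only [Jmat, Pi.smul_apply, smul_eq_mul, Matrix.smul_apply]
  ring

theorem Jmat_mu (r x y z : ℝ) : Jmat (mu r) x y z =
    !![0, 0, 0, -(r * z), 0, -y; 0, 0, z, 0, r * y, 0; 0, -z, 0, 0, 0, -(r * x);
       r * z, 0, 0, 0, x, 0; 0, -(r * y), 0, -x, 0, 0; y, 0, r * x, 0, 0, 0] := by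
  ext a b
  fin_cases a <;> fin_cases b <;> simp [Jmat, E, mu_single, muC, muHalf]

theorem det_Jmat_mu (r x y z : ℝ) :
    (Jmat (mu r) x y z).det = ((1 + r ^ 3) * (x * y * z)) ^ 2 := by
  rw [Jmat_mu]
  simp [Matrix.det_succ_row_zero, Fin.sum_univ_succ, Fin.succAbove]
  ring

def detCoeff (r : ℝ) : ℝ := (1 + r ^ 3) ^ 2 / (1 + r ^ 2) ^ 3

def coordProdSq (w : Fin 3 → ℝ) : ℝ := (w 0 * w 1 * w 2) ^ 2

theorem det_Jmat_nmu (r : ℝ) (w : Fin 3 → ℝ) :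
    (Jmat (nmu r) (w 0) (w 1) (w 2)).det = detCoeff r / 216 * coordProdSq w := by
  have hpos : (0 : ℝ) < 6 * (1 + r ^ 2) := by positivity
  have hsqrt : √(6 * (1 + r ^ 2)) ^ 6 = (6 * (1 + r ^ 2)) ^ 3 := by
    rw [show 6 = 2 * 3 by rfl, pow_mul, sq_sqrt hpos.le]
  unfold nmu
  rw [Jmat_smul, det_smul, det_Jmat_mu, Fintype.card_fin, div_pow, one_pow, hsqrt,
    detCoeff, coordProdSq]
  field_simp
  ring

theorem hasDerivAt_detCoeff (r : ℝ) :
    HasDerivAt detCoeff (6 * r * (r - 1) * (1 + r ^ 3) / (1 + r ^ 2) ^ 4) r := by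
  have hnum : HasDerivAt (fun x : ℝ => (1 + x ^ 3) ^ 2) _ r :=
    ((hasDerivAt_pow 3 r).const_add 1).pow 2
  have hden : HasDerivAt (fun x : ℝ => (1 + x ^ 2) ^ 3) _ r :=
    ((hasDerivAt_pow 2 r).const_add 1).pow 3
  refine (hnum.fun_div hden (by positivity)).congr_deriv ?_
  field_simp
  norm_num
  ring

theorem strictMonoOn_detCoeff : StrictMonoOn detCoeff (Set.Ici 1) := by
  refine strictMonoOn_of_deriv_pos (convex_Ici 1)
    (fun r _ => (hasDerivAt_detCoeff r).continuousAt.continuousWithinAt) fun r hr => ?_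
  rw [interior_Ici, Set.mem_Ioi] at hr
  have hr₀ : 0 < r := by linarith
  have hr₁ : 0 < r - 1 := by linarith
  rw [(hasDerivAt_detCoeff r).deriv]
  positivity

theorem dotProduct_mulVec_self_of_mem_orthogonalGroup {n R : Type*} [Fintype n]
    [DecidableEq n] [CommRing R] {B : Matrix n n R} (hB : B ∈ orthogonalGroup n R)
    (w : n → R) : B *ᵥ w ⬝ᵥ B *ᵥ w = w ⬝ᵥ w := by
  rw [dotProduct_mulVec, ← mulVec_transpose, mulVec_mulVec,
    (mem_orthogonalGroup_iff' _ _).mp hB, one_mulVec]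

theorem sq_mul_mul_le_sum_sq_div_three_pow (a b c : ℝ) :
    (a * b * c) ^ 2 ≤ ((a ^ 2 + b ^ 2 + c ^ 2) / 3) ^ 3 := by
  nlinarith [sq_nonneg (a ^ 2 - b ^ 2), sq_nonneg (b ^ 2 - c ^ 2), sq_nonneg (a ^ 2 - c ^ 2),
    sq_nonneg a, sq_nonneg b, sq_nonneg c]

theorem coordProdSq_mulVec_one_le {B : Matrix (Fin 3) (Fin 3) ℝ}
    (hB : B ∈ orthogonalGroup (Fin 3) ℝ) : coordProdSq (B *ᵥ 1) ≤ 1 := by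
  have hnorm := dotProduct_mulVec_self_of_mem_orthogonalGroup hB 1
  simp only [dotProduct, Fin.sum_univ_three, Pi.one_apply, mul_one] at hnorm
  calc coordProdSq (B *ᵥ 1)
      ≤ (((B *ᵥ 1) 0 ^ 2 + (B *ᵥ 1) 1 ^ 2 + (B *ᵥ 1) 2 ^ 2) / 3) ^ 3 :=
        sq_mul_mul_le_sum_sq_div_three_pow _ _ _
    _ = 1 := by rw [sq, sq, sq, hnorm]; norm_num

theorem eq_of_forall_mul_coordProdSq_eq {B : Matrix (Fin 3) (Fin 3) ℝ}
    (hB : B ∈ orthogonalGroup (Fin 3) ℝ) {a b : ℝ} (ha : 0 ≤ a) (hb : 0 ≤ b)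
    (h : ∀ w, a * coordProdSq w = b * coordProdSq (B *ᵥ w)) : a = b := by
  have hBBt : B *ᵥ (Bᵀ *ᵥ 1) = 1 := by
    rw [mulVec_mulVec, (mem_orthogonalGroup_iff _ _).mp hB, one_mulVec]
  apply le_antisymm
  · calc a = b * coordProdSq (B *ᵥ 1) := by simpa [coordProdSq] using h 1
      _ ≤ b := mul_le_of_le_one_right hb (coordProdSq_mulVec_one_le hB)
  · calc b = a * coordProdSq (Bᵀ *ᵥ 1) := by simpa [coordProdSq, hBBt] using (h (Bᵀ *ᵥ 1)).symm
      _ ≤ a := mul_le_of_le_one_right ha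
        (coordProdSq_mulVec_one_le (transpose_mem_unitaryGroup_iff.mpr hB))

/-- if `t,s ∈ (1,∞)` and there are `A₁ ∈ O(6)`, `A₂ ∈ O(3)` with
`A₁⁻¹ J_{ν_s}(w) A₁ = J_{ν_t}(A₂⁻¹ w)` for all `w` in the center (≅ ℝ³), then `t = s`. -/
theorem statement7 (t s : ℝ) (ht : t ∈ Set.Ioi (1:ℝ)) (hs : s ∈ Set.Ioi (1:ℝ))
    (A₁ : Matrix (Fin 6) (Fin 6) ℝ) (A₂ : Matrix (Fin 3) (Fin 3) ℝ)
    (hA₁ : A₁ ∈ Matrix.orthogonalGroup (Fin 6) ℝ)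
    (hA₂ : A₂ ∈ Matrix.orthogonalGroup (Fin 3) ℝ)
    (h : ∀ w : Fin 3 → ℝ,
      A₁⁻¹ * Jmat (nmu s) (w 0) (w 1) (w 2) * A₁
        = Jmat (nmu t) (A₂⁻¹.mulVec w 0) (A₂⁻¹.mulVec w 1) (A₂⁻¹.mulVec w 2)) :
    t = s := by
  have hA₁unit : IsUnit A₁ := Unitary.isUnit_coe (U := ⟨A₁, hA₁⟩)
  have hA₂inv : A₂⁻¹ ∈ orthogonalGroup (Fin 3) ℝ := by
    rw [inv_eq_left_inv ((mem_orthogonalGroup_iff' _ _).mp hA₂)]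
    exact transpose_mem_unitaryGroup_iff.mpr hA₂
  have hdet (w : Fin 3 → ℝ) :
      detCoeff s / 216 * coordProdSq w = detCoeff t / 216 * coordProdSq (A₂⁻¹ *ᵥ w) := by
    simpa only [det_conj' hA₁unit, det_Jmat_nmu] using congrArg det (h w)
  have hcoeff := eq_of_forall_mul_coordProdSq_eq hA₂inv
    (by unfold detCoeff; positivity) (by unfold detCoeff; positivity) hdet
  exact strictMonoOn_detCoeff.injOn (Set.Ioi_subset_Ici_self ht) (Set.Ioi_subset_Ici_self hs)
    (by linarith)
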